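/- arXiv:2211.01416 — 2 statements merged into one kernel-verified Lean document; each statement's English description precedes it below -/
import Mathlib

section
/- Let R be a commutative ring with unity and let φ, φ* be invertible skew-symmetric matrices of size 2n over R such that φ = (1 ⊥ ε)^t φ* (1 ⊥ ε) for some ε ∈ E_{2n−1}(R). Then Sp_φ(R) = (1 ⊥ ε)^{−1} Sp_{φ*}(R) (1 ⊥ ε) and ESp_φ(R) = (1 ⊥ ε)^{−1} ESp_{φ*}(R) (1 ⊥ ε). -/
/- Common definitions: symplectic groups with respect to an invertible
   skew-symmetric (alternating) matrix, elementary symplectic groups,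
   Pfaffian, standard symplectic matrix, elementary linear groups. -/

namespace PaperESp

open Matrix

variable {R : Type*} [CommRing R]

/-- The Pfaffian of a `2n × 2n` matrix, as the sum over perfect matchings. -/
def pf {n : ℕ} (A : Matrix (Fin (2*n)) (Fin (2*n)) R) : R :=
  ∑ σ ∈ Finset.univ.filter (fun σ : Equiv.Perm (Fin (2*n)) =>
      (∀ k : Fin n, (σ ⟨2*k.1, by have := k.2; omega⟩).1 < (σ ⟨2*k.1+1, by have := k.2; omega⟩).1) ∧
      (∀ k l : Fin n, k < l →
        (σ ⟨2*k.1, by have := k.2; omega⟩).1 < (σ ⟨2*l.1, by have := l.2; omega⟩).1)),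
    ((Equiv.Perm.sign σ : ℤ) : R) *
      ∏ k : Fin n, A (σ ⟨2*k.1, by have := k.2; omega⟩) (σ ⟨2*k.1+1, by have := k.2; omega⟩)

/-- `φ = [[0, -cᵀ],[c, ν]]`: the column `c`. -/
def cvec {n : ℕ} (φ : Matrix (Fin (2*n)) (Fin (2*n)) R) : Fin (2*n-1) → R :=
  fun i => φ ⟨i.1+1, by have := i.2; omega⟩ ⟨0, by have := i.2; omega⟩

/-- `φ = [[0, -cᵀ],[c, ν]]`: the block `ν`. -/
def nuMat {n : ℕ} (φ : Matrix (Fin (2*n)) (Fin (2*n)) R) :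
    Matrix (Fin (2*n-1)) (Fin (2*n-1)) R :=
  Matrix.of fun i j => φ ⟨i.1+1, by have := i.2; omega⟩ ⟨j.1+1, by have := j.2; omega⟩

/-- `φ⁻¹ = [[0, dᵀ],[-d, μ]]`: the row `d`. -/
noncomputable def dvec {n : ℕ} (φ : Matrix (Fin (2*n)) (Fin (2*n)) R) : Fin (2*n-1) → R :=
  fun i => φ⁻¹ ⟨0, by have := i.2; omega⟩ ⟨i.1+1, by have := i.2; omega⟩

/-- `φ⁻¹ = [[0, dᵀ],[-d, μ]]`: the block `μ`. -/
noncomputable def muMat {n : ℕ} (φ : Matrix (Fin (2*n)) (Fin (2*n)) R) :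
    Matrix (Fin (2*n-1)) (Fin (2*n-1)) R :=
  Matrix.of fun i j => φ⁻¹ ⟨i.1+1, by have := i.2; omega⟩ ⟨j.1+1, by have := j.2; omega⟩

/-- Vaserstein's matrix `α_φ(v) = I + d vᵀ ν`. -/
noncomputable def alphaMat {n : ℕ} (φ : Matrix (Fin (2*n)) (Fin (2*n)) R) (v : Fin (2*n-1) → R) :
    Matrix (Fin (2*n-1)) (Fin (2*n-1)) R :=
  1 + Matrix.of fun i j => dvec φ i * ∑ k, v k * nuMat φ k j

/-- Vaserstein's matrix `β_φ(v) = I + μ v cᵀ`. -/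
noncomputable def betaMat {n : ℕ} (φ : Matrix (Fin (2*n)) (Fin (2*n)) R) (v : Fin (2*n-1) → R) :
    Matrix (Fin (2*n-1)) (Fin (2*n-1)) R :=
  1 + Matrix.of fun i j => (∑ k, muMat φ i k * v k) * cvec φ j

/-- The generator `C_φ(v) = [[1, 0],[v, α_φ(v)]]`. -/
noncomputable def Cmat {n : ℕ} (φ : Matrix (Fin (2*n)) (Fin (2*n)) R) (v : Fin (2*n-1) → R) :
    Matrix (Fin (2*n)) (Fin (2*n)) R :=
  Matrix.of fun i j =>
    if hi : i.1 = 0 then (if j.1 = 0 then (1:R) else 0)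
    else if hj : j.1 = 0 then v ⟨i.1-1, by have := i.2; omega⟩
    else alphaMat φ v ⟨i.1-1, by have := i.2; omega⟩ ⟨j.1-1, by have := j.2; omega⟩

/-- The generator `R_φ(v) = [[1, vᵀ],[0, β_φ(v)]]`. -/
noncomputable def Rmat {n : ℕ} (φ : Matrix (Fin (2*n)) (Fin (2*n)) R) (v : Fin (2*n-1) → R) :
    Matrix (Fin (2*n)) (Fin (2*n)) R :=
  Matrix.of fun i j =>
    if hi : i.1 = 0 then (if hj : j.1 = 0 then (1:R) else v ⟨j.1-1, by have := j.2; omega⟩)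
    else if hj : j.1 = 0 then 0
    else betaMat φ v ⟨i.1-1, by have := i.2; omega⟩ ⟨j.1-1, by have := j.2; omega⟩

/-- The symplectic group `Sp_φ(R) = {α ∈ GL_m(R) | αᵀ φ α = φ}`, as a subgroup of the
    units of the matrix ring. -/
def Sp {m : ℕ} (φ : Matrix (Fin m) (Fin m) R) : Subgroup (Matrix (Fin m) (Fin m) R)ˣ where
  carrier := {g | (↑g : Matrix (Fin m) (Fin m) R)ᵀ * φ * (↑g : Matrix (Fin m) (Fin m) R) = φ}
  one_mem' := by simp
  mul_mem' := by
    intro a b ha hb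
    simp only [Set.mem_setOf_eq, Units.val_mul] at *
    have h : ((↑a : Matrix (Fin m) (Fin m) R) * (↑b : Matrix (Fin m) (Fin m) R))ᵀ * φ *
          ((↑a : Matrix (Fin m) (Fin m) R) * (↑b : Matrix (Fin m) (Fin m) R))
        = (↑b : Matrix (Fin m) (Fin m) R)ᵀ *
            ((↑a : Matrix (Fin m) (Fin m) R)ᵀ * φ * (↑a : Matrix (Fin m) (Fin m) R)) *
            (↑b : Matrix (Fin m) (Fin m) R) := by
      simp only [Matrix.transpose_mul, Matrix.mul_assoc]
    rw [h, ha, hb]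
  inv_mem' := by
    intro a ha
    simp only [Set.mem_setOf_eq] at *
    have h : (↑a⁻¹ : Matrix (Fin m) (Fin m) R)ᵀ * φ * (↑a⁻¹ : Matrix (Fin m) (Fin m) R)
        = (↑a⁻¹ : Matrix (Fin m) (Fin m) R)ᵀ *
            ((↑a : Matrix (Fin m) (Fin m) R)ᵀ * φ * (↑a : Matrix (Fin m) (Fin m) R)) *
            (↑a⁻¹ : Matrix (Fin m) (Fin m) R) := by
      rw [ha]
    rw [h]
    have h2 : (↑a⁻¹ : Matrix (Fin m) (Fin m) R)ᵀ *
          ((↑a : Matrix (Fin m) (Fin m) R)ᵀ * φ * (↑a : Matrix (Fin m) (Fin m) R)) *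
          (↑a⁻¹ : Matrix (Fin m) (Fin m) R)
        = ((↑a : Matrix (Fin m) (Fin m) R) * (↑a⁻¹ : Matrix (Fin m) (Fin m) R))ᵀ * φ *
          ((↑a : Matrix (Fin m) (Fin m) R) * (↑a⁻¹ : Matrix (Fin m) (Fin m) R)) := by
      simp only [Matrix.transpose_mul, Matrix.mul_assoc]
    rw [h2, Units.mul_inv]
    simp

/-- The elementary symplectic group `ESp_φ(R)` with respect to `φ`, generated by the
    `C_φ(v)` and `R_φ(v)`. -/
def Esp {n : ℕ} (φ : Matrix (Fin (2*n)) (Fin (2*n)) R) :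
    Subgroup (Matrix (Fin (2*n)) (Fin (2*n)) R)ˣ :=
  Subgroup.closure {g | ∃ v : Fin (2*n-1) → R,
    (↑g : Matrix (Fin (2*n)) (Fin (2*n)) R) = Cmat φ v ∨
    (↑g : Matrix (Fin (2*n)) (Fin (2*n)) R) = Rmat φ v}

/-- `ESp_φ(I)`, generated by the `C_φ(v)`, `R_φ(v)` with `v ∈ I^{2n-1}`. -/
def EspIdeal {n : ℕ} (φ : Matrix (Fin (2*n)) (Fin (2*n)) R) (I : Ideal R) :
    Subgroup (Matrix (Fin (2*n)) (Fin (2*n)) R)ˣ :=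
  Subgroup.closure {g | ∃ v : Fin (2*n-1) → R, (∀ i, v i ∈ I) ∧
    ((↑g : Matrix (Fin (2*n)) (Fin (2*n)) R) = Cmat φ v ∨
     (↑g : Matrix (Fin (2*n)) (Fin (2*n)) R) = Rmat φ v)}

/-- The relative elementary symplectic group `ESp_φ(R,I)`: the normal closure of
    `ESp_φ(I)` in `ESp_φ(R)`. -/
def REsp {n : ℕ} (φ : Matrix (Fin (2*n)) (Fin (2*n)) R) (I : Ideal R) :
    Subgroup (Matrix (Fin (2*n)) (Fin (2*n)) R)ˣ :=
  Subgroup.closure {g | ∃ e ∈ Esp φ, ∃ x ∈ EspIdeal φ I, g = e * x * e⁻¹}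

/-- The standard skew-symmetric matrix `ψ_n = Σ (e_{2i-1,2i} - e_{2i,2i-1})` (1-based). -/
def psi (R : Type*) [CommRing R] (n : ℕ) : Matrix (Fin (2*n)) (Fin (2*n)) R :=
  Matrix.of fun i j =>
    if i.1 + 1 = j.1 ∧ j.1 % 2 = 1 then (1:R)
    else if j.1 + 1 = i.1 ∧ i.1 % 2 = 1 then -1
    else 0

/-- The permutation `σ` of `{1,…,2n}` with `σ(2i-1) = 2i`, `σ(2i) = 2i-1` (0-based swap of
    `2i ↔ 2i+1`). -/
def sigmaFn (n : ℕ) (i : Fin (2*n)) : Fin (2*n) :=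
  if h : i.1 % 2 = 0 then ⟨i.1+1, by have := i.2; omega⟩ else ⟨i.1-1, by have := i.2; omega⟩

/-- The elementary symplectic generators `se_{ij}(a)`. -/
def seMat {R : Type*} [CommRing R] (n : ℕ) (i j : Fin (2*n)) (a : R) :
    Matrix (Fin (2*n)) (Fin (2*n)) R :=
  if i = sigmaFn n j then 1 + Matrix.single i j a
  else 1 + Matrix.single i j a
         - Matrix.single (sigmaFn n j) (sigmaFn n i) ((-1:R)^(i.1+j.1) * a)

/-- The elementary symplectic group `ESp_{2n}(R)`. -/
def Esp2n (R : Type*) [CommRing R] (n : ℕ) : Subgroup (Matrix (Fin (2*n)) (Fin (2*n)) R)ˣ :=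
  Subgroup.closure {g | ∃ i j : Fin (2*n), ∃ a : R, i ≠ j ∧
    (↑g : Matrix (Fin (2*n)) (Fin (2*n)) R) = seMat n i j a}

/-- `ESp_{2n}(I)`. -/
def Esp2nIdeal (R : Type*) [CommRing R] (n : ℕ) (I : Ideal R) :
    Subgroup (Matrix (Fin (2*n)) (Fin (2*n)) R)ˣ :=
  Subgroup.closure {g | ∃ i j : Fin (2*n), ∃ x : R, i ≠ j ∧ x ∈ I ∧
    (↑g : Matrix (Fin (2*n)) (Fin (2*n)) R) = seMat n i j x}

/-- The relative elementary symplectic group `ESp_{2n}(R,I)`: the normal closure of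
    `ESp_{2n}(I)` in `ESp_{2n}(R)`. -/
def REsp2n (R : Type*) [CommRing R] (n : ℕ) (I : Ideal R) :
    Subgroup (Matrix (Fin (2*n)) (Fin (2*n)) R)ˣ :=
  Subgroup.closure {g | ∃ e ∈ Esp2n R n, ∃ x ∈ Esp2nIdeal R n I, g = e * x * e⁻¹}

/-- The elementary linear group `E_m(R)`. -/
def Egrp (R : Type*) [CommRing R] (m : ℕ) : Subgroup (Matrix (Fin m) (Fin m) R)ˣ :=
  Subgroup.closure {g | ∃ i j : Fin m, ∃ a : R, i ≠ j ∧
    (↑g : Matrix (Fin m) (Fin m) R) = 1 + Matrix.single i j a}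

/-- `E_m(I)`. -/
def EgrpIdeal (R : Type*) [CommRing R] (m : ℕ) (I : Ideal R) :
    Subgroup (Matrix (Fin m) (Fin m) R)ˣ :=
  Subgroup.closure {g | ∃ i j : Fin m, ∃ x : R, i ≠ j ∧ x ∈ I ∧
    (↑g : Matrix (Fin m) (Fin m) R) = 1 + Matrix.single i j x}

/-- The relative elementary linear group `E_m(R,I)`: the normal closure of `E_m(I)`
    in `E_m(R)`. -/
def REgrp (R : Type*) [CommRing R] (m : ℕ) (I : Ideal R) :
    Subgroup (Matrix (Fin m) (Fin m) R)ˣ :=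
  Subgroup.closure {g | ∃ e ∈ Egrp R m, ∃ x ∈ EgrpIdeal R m I, g = e * x * e⁻¹}

/-- `1 ⊥ β`: the block diagonal matrix `diag(1, β)` of size `2n`. -/
def onePerp {n : ℕ} (β : Matrix (Fin (2*n-1)) (Fin (2*n-1)) R) :
    Matrix (Fin (2*n)) (Fin (2*n)) R :=
  Matrix.of fun i j =>
    if hi : i.1 = 0 then (if j.1 = 0 then (1:R) else 0)
    else if hj : j.1 = 0 then 0
    else β ⟨i.1-1, by have := i.2; omega⟩ ⟨j.1-1, by have := j.2; omega⟩

/-- The congruence kernel: invertible matrices reducing to the identity modulo `I`. -/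
def congrKer (R : Type*) [CommRing R] (m : ℕ) (I : Ideal R) :
    Subgroup (Matrix (Fin m) (Fin m) R)ˣ :=
  (Units.map ((Ideal.Quotient.mk I).mapMatrix.toMonoidHom :
      Matrix (Fin m) (Fin m) R →* Matrix (Fin m) (Fin m) (R ⧸ I))).ker

/-- `Sp_φ(R,I)`: the kernel of the reduction map `Sp_φ(R) → Sp_φ(R/I)`. -/
def SpRel {m : ℕ} (φ : Matrix (Fin m) (Fin m) R) (I : Ideal R) :
    Subgroup (Matrix (Fin m) (Fin m) R)ˣ :=
  Sp φ ⊓ congrKer R m I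

/-! Write `E = 1 ⊥ ε`. Congruence by `E⁻¹` turns `gᵀ φ g = φ` into
`(E g E⁻¹)ᵀ φ* (E g E⁻¹) = φ*`, which is the claim for `Sp`. For `ESp`, the blocks of `φ` and
of `φ⁻¹ = E⁻¹ φ*⁻¹ E⁻ᵀ` transform as `c = εᵀ c*`, `ν = εᵀ ν* ε`, `d = ε⁻¹ d*`,
`μ = ε⁻¹ μ* ε⁻ᵀ`, whence `C_φ(v) = E⁻¹ C_{φ*}(ε v) E` and `R_φ(v) = E⁻¹ R_{φ*}(ε⁻ᵀ v) E`.
Since `v ↦ ε v` and `v ↦ ε⁻ᵀ v` are bijections, conjugation by `E` carries the generators of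
`ESp_φ` onto those of `ESp_{φ*}`. -/

set_option linter.unusedSectionVars false

section Blocks

variable {n : ℕ}

/-- The matrix `[[x, rᵀ], [u, β]]`. -/
def blockMat (x : R) (r u : Fin (2*n-1) → R) (β : Matrix (Fin (2*n-1)) (Fin (2*n-1)) R) :
    Matrix (Fin (2*n)) (Fin (2*n)) R :=
  Matrix.of fun i j =>
    if i.1 = 0 then (if j.1 = 0 then x else r ⟨j.1-1, by have := j.2; omega⟩)
    else if j.1 = 0 then u ⟨i.1-1, by have := i.2; omega⟩
    else β ⟨i.1-1, by have := i.2; omega⟩ ⟨j.1-1, by have := j.2; omega⟩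

lemma sum_fin_two_mul {M : Type*} [AddCommMonoid M] (hn : 0 < n) (f : Fin (2*n) → M) :
    ∑ k, f k = f ⟨0, by omega⟩ + ∑ k : Fin (2*n-1), f ⟨k.1+1, by have := k.2; omega⟩ := by
  rw [← (finCongr (by omega : 2*n - 1 + 1 = 2*n)).sum_comp f, Fin.sum_univ_succ]
  rfl

lemma blockMat_mul (x x' : R) (r r' u u' : Fin (2*n-1) → R)
    (β β' : Matrix (Fin (2*n-1)) (Fin (2*n-1)) R) :
    blockMat x r u β * blockMat x' r' u' β' =
      blockMat (x * x' + r ⬝ᵥ u') (x • r' + r ᵥ* β') (x' • u + β *ᵥ u')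
        (vecMulVec u r' + β * β') := by
  ext ⟨i, hi⟩ ⟨j, hj⟩
  rw [mul_apply, sum_fin_two_mul (by omega)]
  rcases i with _ | i <;> rcases j with _ | j <;>
    simp [blockMat, dotProduct, vecMul, mulVec, vecMulVec, mul_apply, mul_comm]

lemma eq_blockMat (hn : 0 < n) (M : Matrix (Fin (2*n)) (Fin (2*n)) R) :
    M = blockMat (M ⟨0, by omega⟩ ⟨0, by omega⟩)
      (fun j => M ⟨0, by omega⟩ ⟨j.1+1, by have := j.2; omega⟩) (cvec M) (nuMat M) := by
  ext ⟨i, hi⟩ ⟨j, hj⟩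
  rcases i with _ | i <;> rcases j with _ | j <;> simp [blockMat, cvec, nuMat]

@[simp]
lemma cvec_blockMat (x : R) (r u : Fin (2*n-1) → R)
    (β : Matrix (Fin (2*n-1)) (Fin (2*n-1)) R) : cvec (blockMat x r u β) = u := by
  funext i; simp [cvec, blockMat]

@[simp]
lemma nuMat_blockMat (x : R) (r u : Fin (2*n-1) → R)
    (β : Matrix (Fin (2*n-1)) (Fin (2*n-1)) R) : nuMat (blockMat x r u β) = β := by
  ext i j; simp [nuMat, blockMat]

lemma onePerp_eq_blockMat (β : Matrix (Fin (2*n-1)) (Fin (2*n-1)) R) :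
    onePerp β = blockMat 1 0 0 β := by
  ext i j
  simp only [onePerp, blockMat, of_apply]
  split_ifs <;> simp

lemma Cmat_eq_blockMat (φ : Matrix (Fin (2*n)) (Fin (2*n)) R) (v : Fin (2*n-1) → R) :
    Cmat φ v = blockMat 1 0 v (alphaMat φ v) := by
  ext i j
  simp only [Cmat, blockMat, of_apply]
  split_ifs <;> simp

lemma Rmat_eq_blockMat (φ : Matrix (Fin (2*n)) (Fin (2*n)) R) (v : Fin (2*n-1) → R) :
    Rmat φ v = blockMat 1 v 0 (betaMat φ v) := by
  ext i j
  simp only [Rmat, blockMat, of_apply]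
  split_ifs <;> simp

lemma onePerp_mul_blockMat_mul_onePerp (p q : Matrix (Fin (2*n-1)) (Fin (2*n-1)) R) (x : R)
    (r u : Fin (2*n-1) → R) (β : Matrix (Fin (2*n-1)) (Fin (2*n-1)) R) :
    onePerp p * blockMat x r u β * onePerp q = blockMat x (r ᵥ* q) (p *ᵥ u) (p * β * q) := by
  simp [onePerp_eq_blockMat, blockMat_mul]

lemma onePerp_mul (p q : Matrix (Fin (2*n-1)) (Fin (2*n-1)) R) :
    onePerp (n := n) p * onePerp q = onePerp (p * q) := by
  simp [onePerp_eq_blockMat, blockMat_mul]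

lemma onePerp_one : onePerp (n := n) (1 : Matrix (Fin (2*n-1)) (Fin (2*n-1)) R) = 1 := by
  ext ⟨i, hi⟩ ⟨j, hj⟩
  rcases i with _ | i <;> rcases j with _ | j <;> simp [onePerp, one_apply, Fin.ext_iff]

lemma onePerp_transpose (β : Matrix (Fin (2*n-1)) (Fin (2*n-1)) R) :
    (onePerp (n := n) β)ᵀ = onePerp βᵀ := by
  ext ⟨i, hi⟩ ⟨j, hj⟩
  rcases i with _ | i <;> rcases j with _ | j <;> simp [onePerp]

def onePerpHom : Matrix (Fin (2*n-1)) (Fin (2*n-1)) R →* Matrix (Fin (2*n)) (Fin (2*n)) R where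
  toFun := onePerp
  map_one' := onePerp_one
  map_mul' p q := (onePerp_mul p q).symm

lemma cvec_onePerp_mul_mul_onePerp (p q : Matrix (Fin (2*n-1)) (Fin (2*n-1)) R)
    (M : Matrix (Fin (2*n)) (Fin (2*n)) R) :
    cvec (onePerp p * M * onePerp q) = p *ᵥ cvec M := by
  rcases n.eq_zero_or_pos with rfl | hn
  · funext i; have := i.2; omega
  conv_lhs => rw [eq_blockMat hn M, onePerp_mul_blockMat_mul_onePerp, cvec_blockMat]

lemma nuMat_onePerp_mul_mul_onePerp (p q : Matrix (Fin (2*n-1)) (Fin (2*n-1)) R)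
    (M : Matrix (Fin (2*n)) (Fin (2*n)) R) :
    nuMat (onePerp p * M * onePerp q) = p * nuMat M * q := by
  rcases n.eq_zero_or_pos with rfl | hn
  · ext i; have := i.2; omega
  conv_lhs => rw [eq_blockMat hn M, onePerp_mul_blockMat_mul_onePerp, nuMat_blockMat]

end Blocks

section Congruence

variable {n : ℕ} {φ ψ : Matrix (Fin (2*n)) (Fin (2*n)) R}
  {e e' : Matrix (Fin (2*n-1)) (Fin (2*n-1)) R}

lemma cvec_eq_of_congr (hrel : φ = (onePerp e)ᵀ * ψ * onePerp e) : cvec φ = eᵀ *ᵥ cvec ψ := by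
  rw [hrel, onePerp_transpose, cvec_onePerp_mul_mul_onePerp]

lemma nuMat_eq_of_congr (hrel : φ = (onePerp e)ᵀ * ψ * onePerp e) :
    nuMat φ = eᵀ * nuMat ψ * e := by
  rw [hrel, onePerp_transpose, nuMat_onePerp_mul_mul_onePerp]

lemma inv_eq_of_congr (he : e' * e = 1) (hrel : φ = (onePerp e)ᵀ * ψ * onePerp e) :
    φ⁻¹ = onePerp e' * ψ⁻¹ * (onePerp e')ᵀ := by
  have hinv : (onePerp e)⁻¹ = onePerp e' :=
    inv_eq_left_inv (by rw [onePerp_mul, he, onePerp_one])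
  rw [hrel, Matrix.mul_inv_rev, Matrix.mul_inv_rev, ← transpose_nonsing_inv, hinv, mul_assoc]

lemma dvec_eq_of_congr (he : e' * e = 1) (hrel : φ = (onePerp e)ᵀ * ψ * onePerp e) :
    dvec φ = e' *ᵥ dvec ψ := by
  have h : φ⁻¹ᵀ = onePerp e' * ψ⁻¹ᵀ * (onePerp e')ᵀ := by
    rw [inv_eq_of_congr he hrel, transpose_mul, transpose_mul, transpose_transpose, mul_assoc]
  change cvec φ⁻¹ᵀ = e' *ᵥ cvec ψ⁻¹ᵀ
  rw [h, onePerp_transpose, cvec_onePerp_mul_mul_onePerp]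

lemma muMat_eq_of_congr (he : e' * e = 1) (hrel : φ = (onePerp e)ᵀ * ψ * onePerp e) :
    muMat φ = e' * muMat ψ * e'ᵀ := by
  change nuMat φ⁻¹ = e' * nuMat ψ⁻¹ * e'ᵀ
  rw [inv_eq_of_congr he hrel, onePerp_transpose, nuMat_onePerp_mul_mul_onePerp]

lemma alphaMat_eq_of_congr (he : e' * e = 1) (hrel : φ = (onePerp e)ᵀ * ψ * onePerp e)
    (v : Fin (2*n-1) → R) : alphaMat φ v = e' * alphaMat ψ (e *ᵥ v) * e := by
  change 1 + vecMulVec (dvec φ) (v ᵥ* nuMat φ) = e' * (1 + vecMulVec (dvec ψ) (_ ᵥ* nuMat ψ)) * e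
  rw [dvec_eq_of_congr he hrel, nuMat_eq_of_congr hrel, mul_add, add_mul, mul_one, he,
    mul_vecMulVec, vecMulVec_mul, ← vecMul_vecMul, ← vecMul_vecMul, vecMul_transpose]

lemma betaMat_eq_of_congr (he : e' * e = 1) (hrel : φ = (onePerp e)ᵀ * ψ * onePerp e)
    (v : Fin (2*n-1) → R) : betaMat φ v = e' * betaMat ψ (e'ᵀ *ᵥ v) * e := by
  change 1 + vecMulVec (muMat φ *ᵥ v) (cvec φ) = e' * (1 + vecMulVec (muMat ψ *ᵥ _) (cvec ψ)) * e
  rw [muMat_eq_of_congr he hrel, cvec_eq_of_congr hrel, mul_add, add_mul, mul_one, he,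
    mul_vecMulVec, vecMulVec_mul, mulVec_mulVec, mulVec_mulVec, mulVec_transpose]

lemma Cmat_eq_of_congr (he : e' * e = 1) (hrel : φ = (onePerp e)ᵀ * ψ * onePerp e)
    (v : Fin (2*n-1) → R) : Cmat φ v = onePerp e' * Cmat ψ (e *ᵥ v) * onePerp e := by
  rw [Cmat_eq_blockMat, Cmat_eq_blockMat, onePerp_mul_blockMat_mul_onePerp,
    alphaMat_eq_of_congr he hrel, mulVec_mulVec, he, one_mulVec, zero_vecMul]

lemma Rmat_eq_of_congr (he : e' * e = 1) (hrel : φ = (onePerp e)ᵀ * ψ * onePerp e)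
    (v : Fin (2*n-1) → R) : Rmat φ v = onePerp e' * Rmat ψ (e'ᵀ *ᵥ v) * onePerp e := by
  rw [Rmat_eq_blockMat, Rmat_eq_blockMat, onePerp_mul_blockMat_mul_onePerp,
    betaMat_eq_of_congr he hrel, mulVec_transpose, vecMul_vecMul, he, vecMul_one, mulVec_zero]

end Congruence

section Conjugation

variable {m : ℕ}

lemma mem_map_conj_inv_iff {M : Type*} [Monoid M] (E : Mˣ) (K : Subgroup Mˣ) (g : Mˣ) :
    g ∈ K.map (MulAut.conj E⁻¹).toMonoidHom ↔ ∃ h ∈ K, (g : M) = ↑E⁻¹ * h * E := by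
  simp only [Subgroup.mem_map, MulEquiv.coe_toMonoidHom, MulAut.conj_apply, inv_inv,
    Units.ext_iff, Units.val_mul, eq_comm (a := (g : M))]

lemma transpose_mul_mul_cancel (P : Matrix (Fin m) (Fin m) R) (hP : IsUnit P)
    {X Y : Matrix (Fin m) (Fin m) R} : Pᵀ * X * P = Pᵀ * Y * P ↔ X = Y := by
  rw [hP.mul_left_inj, ((isUnit_transpose P).mpr hP).mul_right_inj]

lemma Sp_eq_map_conj {φ ψ : Matrix (Fin m) (Fin m) R} (E : (Matrix (Fin m) (Fin m) R)ˣ)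
    (hφ : φ = (E : Matrix (Fin m) (Fin m) R)ᵀ * ψ * (E : Matrix (Fin m) (Fin m) R)) :
    Sp φ = (Sp ψ).map (MulAut.conj E⁻¹).toMonoidHom := by
  subst hφ
  ext g
  rw [Subgroup.mem_map_equiv, MulAut.conj_symm_apply, inv_inv]
  change _ = _ ↔ _ = _
  rw [← transpose_mul_mul_cancel _ E⁻¹.isUnit]
  have hE : (↑E⁻¹ : Matrix (Fin m) (Fin m) R)ᵀ * (E : Matrix (Fin m) (Fin m) R)ᵀ = 1 := by
    rw [← transpose_mul, E.mul_inv, transpose_one]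
  congr! 1
  · simp only [Units.val_mul, transpose_mul, mul_assoc]
  · simp only [← mul_assoc, hE, one_mul]
    simp only [mul_assoc, E.mul_inv, mul_one]

lemma Esp_eq_map_conj {n : ℕ} {φ ψ : Matrix (Fin (2*n)) (Fin (2*n)) R}
    (ε : (Matrix (Fin (2*n-1)) (Fin (2*n-1)) R)ˣ)
    (hrel : φ = (onePerp (ε : Matrix (Fin (2*n-1)) (Fin (2*n-1)) R))ᵀ * ψ * onePerp ↑ε) :
    Esp φ = (Esp ψ).map (MulAut.conj (Units.map onePerpHom ε)⁻¹).toMonoidHom := by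
  set E := Units.map onePerpHom ε
  have hC (v) : Cmat φ v = (↑E⁻¹ : Matrix (Fin (2*n)) (Fin (2*n)) R) *
      Cmat ψ ((ε : Matrix _ _ R) *ᵥ v) * (E : Matrix (Fin (2*n)) (Fin (2*n)) R) :=
    Cmat_eq_of_congr ε.inv_mul hrel v
  have hR (v) : Rmat φ v = (↑E⁻¹ : Matrix (Fin (2*n)) (Fin (2*n)) R) *
      Rmat ψ ((↑ε⁻¹ : Matrix _ _ R)ᵀ *ᵥ v) * (E : Matrix (Fin (2*n)) (Fin (2*n)) R) :=
    Rmat_eq_of_congr ε.inv_mul hrel v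
  rw [Esp, Esp, MonoidHom.map_closure]
  congr 1
  ext g
  simp only [Set.mem_image, MulEquiv.coe_toMonoidHom, MulAut.conj_apply, inv_inv]
  constructor
  · rintro ⟨v, hg | hg⟩
    · refine ⟨E * g * E⁻¹, ⟨ε *ᵥ v, Or.inl ?_⟩, by group⟩
      simp [hg, hC, mul_assoc]
    · refine ⟨E * g * E⁻¹, ⟨(↑ε⁻¹ : Matrix _ _ R)ᵀ *ᵥ v, Or.inr ?_⟩, by group⟩
      simp [hg, hR, mul_assoc]
  · rintro ⟨h, ⟨w, hh | hh⟩, rfl⟩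
    · refine ⟨↑ε⁻¹ *ᵥ w, Or.inl ?_⟩
      simp [hh, hC, mulVec_mulVec]
    · refine ⟨(ε : Matrix _ _ R)ᵀ *ᵥ w, Or.inr ?_⟩
      simp [hh, hR, mulVec_mulVec, ← transpose_mul]

end Conjugation

theorem sp_esp_conjugation_general {R : Type*} [CommRing R] (n : ℕ)
    (φ φstar : Matrix (Fin (2*n)) (Fin (2*n)) R)
    (ε : (Matrix (Fin (2*n-1)) (Fin (2*n-1)) R)ˣ)
    (hrel : φ = (onePerp (n := n) (ε : Matrix (Fin (2*n-1)) (Fin (2*n-1)) R))ᵀ * φstar *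
        onePerp (n := n) (ε : Matrix (Fin (2*n-1)) (Fin (2*n-1)) R)) :
    (∀ g : (Matrix (Fin (2*n)) (Fin (2*n)) R)ˣ, g ∈ Sp φ ↔
      ∃ h ∈ Sp φstar, (g : Matrix (Fin (2*n)) (Fin (2*n)) R) =
        onePerp (n := n) ((ε⁻¹ : (Matrix (Fin (2*n-1)) (Fin (2*n-1)) R)ˣ) :
            Matrix (Fin (2*n-1)) (Fin (2*n-1)) R) *
          (h : Matrix (Fin (2*n)) (Fin (2*n)) R) *
          onePerp (n := n) (ε : Matrix (Fin (2*n-1)) (Fin (2*n-1)) R)) ∧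
    (∀ g : (Matrix (Fin (2*n)) (Fin (2*n)) R)ˣ, g ∈ Esp φ ↔
      ∃ h ∈ Esp φstar, (g : Matrix (Fin (2*n)) (Fin (2*n)) R) =
        onePerp (n := n) ((ε⁻¹ : (Matrix (Fin (2*n-1)) (Fin (2*n-1)) R)ˣ) :
            Matrix (Fin (2*n-1)) (Fin (2*n-1)) R) *
          (h : Matrix (Fin (2*n)) (Fin (2*n)) R) *
          onePerp (n := n) (ε : Matrix (Fin (2*n-1)) (Fin (2*n-1)) R)) := by
  have hE : (Units.map onePerpHom ε : Matrix (Fin (2*n)) (Fin (2*n)) R) = onePerp ↑ε := rfl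
  rw [Sp_eq_map_conj _ (by rwa [hE]), Esp_eq_map_conj ε hrel]
  exact ⟨mem_map_conj_inv_iff _ _, mem_map_conj_inv_iff _ _⟩

/-- if `φ = (1 ⊥ ε)ᵀ φ* (1 ⊥ ε)` with `ε ∈ E_{2n-1}(R)`, then
`Sp_φ(R) = (1 ⊥ ε)⁻¹ Sp_{φ*}(R) (1 ⊥ ε)` and `ESp_φ(R) = (1 ⊥ ε)⁻¹ ESp_{φ*}(R) (1 ⊥ ε)`. -/
theorem sp_esp_conjugation {R : Type*} [CommRing R] (n : ℕ)
    (φ φstar : Matrix (Fin (2*n)) (Fin (2*n)) R)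
    (hskew : φᵀ = -φ) (hinv : IsUnit φ)
    (hskewstar : φstarᵀ = -φstar) (hinvstar : IsUnit φstar)
    (ε : (Matrix (Fin (2*n-1)) (Fin (2*n-1)) R)ˣ) (hε : ε ∈ Egrp R (2*n-1))
    (hrel : φ = (onePerp (n := n) (ε : Matrix (Fin (2*n-1)) (Fin (2*n-1)) R))ᵀ * φstar *
        onePerp (n := n) (ε : Matrix (Fin (2*n-1)) (Fin (2*n-1)) R)) :
    (∀ g : (Matrix (Fin (2*n)) (Fin (2*n)) R)ˣ, g ∈ Sp φ ↔
      ∃ h ∈ Sp φstar, (g : Matrix (Fin (2*n)) (Fin (2*n)) R) =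
        onePerp (n := n) ((ε⁻¹ : (Matrix (Fin (2*n-1)) (Fin (2*n-1)) R)ˣ) :
            Matrix (Fin (2*n-1)) (Fin (2*n-1)) R) *
          (h : Matrix (Fin (2*n)) (Fin (2*n)) R) *
          onePerp (n := n) (ε : Matrix (Fin (2*n-1)) (Fin (2*n-1)) R)) ∧
    (∀ g : (Matrix (Fin (2*n)) (Fin (2*n)) R)ˣ, g ∈ Esp φ ↔
      ∃ h ∈ Esp φstar, (g : Matrix (Fin (2*n)) (Fin (2*n)) R) =
        onePerp (n := n) ((ε⁻¹ : (Matrix (Fin (2*n-1)) (Fin (2*n-1)) R)ˣ) :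
            Matrix (Fin (2*n-1)) (Fin (2*n-1)) R) *
          (h : Matrix (Fin (2*n)) (Fin (2*n)) R) *
          onePerp (n := n) (ε : Matrix (Fin (2*n-1)) (Fin (2*n-1)) R)) :=
  sp_esp_conjugation_general n φ φstar ε hrel

end PaperESp
end

section
/- Let R be a commutative ring with unity in which 2 is invertible (R = 2R), let n ≥ 2, and let I be an ideal of R. Then the relative elementary symplectic group ESp_{2n}(R,I) is the smallest normal subgroup of ESp_{2n}(R) containing the elements se_{21}(x) for all x ∈ I. -/
/- Common definitions: symplectic groups with respect to an invertible
   skew-symmetric (alternating) matrix, elementary symplectic groups,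
   Pfaffian, standard symplectic matrix, elementary linear groups. -/

namespace PaperESp

open Matrix

variable {R : Type*} [CommRing R]

/-! `ESp_{2n}(R,I)` is by definition the subgroup generated by the `ESp_{2n}(R)`-conjugates of
`ESp_{2n}(I)`, so everything except minimality is formal. For minimality, let `H` be normalised
by `ESp_{2n}(R)` and contain the long root elements `se_{21}(I)`; two commutator formulas show
that `H` contains every `se_{ij}(I)`:

* `⁅se_{σj,j}(a), se_{jk}(b)⁆ = se_{σj,k}(ab) se_{σk,k}(±ab²)`; dividing the commutators for `b`
  and `-b` cancels the long root factor, so long roots at `j` give the short roots `se_{σj,k}`;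
* `⁅se_{σk,i}(a), se_{ki}(b)⁆ = se_{σi,i}(±2ab)`, so short roots give long roots at every
  `i ∉ {k, σk}`; as `n ≥ 2` there is a third pair of indices to reach `σk` as well.

Both steps produce parameters `2ab`, which is why `2` has to be invertible. -/

open scoped commutatorElement

section ConjClosure

variable {G : Type*} [Group G]

def conjClosure (K S : Subgroup G) : Subgroup G :=
  Subgroup.closure {g | ∃ k ∈ K, ∃ x ∈ S, g = k * x * k⁻¹}

variable {K S H : Subgroup G}

lemma mem_conjClosure_of_mem {x : G} (hx : x ∈ S) : x ∈ conjClosure K S :=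
  Subgroup.subset_closure ⟨1, K.one_mem, x, hx, by group⟩

lemma conj_mem_conjClosure {k x : G} (hk : k ∈ K) (hx : x ∈ conjClosure K S) :
    k * x * k⁻¹ ∈ conjClosure K S := by
  suffices conjClosure K S ≤ (conjClosure K S).comap (MulAut.conj k).toMonoidHom from this hx
  refine (Subgroup.closure_le _).mpr ?_
  rintro _ ⟨k', hk', y, hy, rfl⟩
  exact Subgroup.subset_closure ⟨k * k', K.mul_mem hk hk', y, hy, by simp [mul_assoc]⟩

lemma conjClosure_le (hH : ∀ k ∈ K, ∀ h ∈ H, k * h * k⁻¹ ∈ H) (hS : S ≤ H) :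
    conjClosure K S ≤ H :=
  (Subgroup.closure_le _).mpr fun _ ⟨k, hk, x, hx, hg⟩ => hg ▸ hH k hk x (hS hx)

lemma commutatorElement_mem_of_left_mem (hH : ∀ k ∈ K, ∀ h ∈ H, k * h * k⁻¹ ∈ H) {a b : G}
    (ha : a ∈ H) (hb : b ∈ K) : ⁅a, b⁆ ∈ H := by
  rw [commutatorElement_def, mul_assoc, mul_assoc]
  exact H.mul_mem ha (by simpa only [mul_assoc] using hH b hb _ (H.inv_mem ha))

end ConjClosure

section Sigma

variable {n : ℕ}

lemma sigmaFn_val (i : Fin (2*n)) :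
    (sigmaFn n i).1 = if i.1 % 2 = 0 then i.1 + 1 else i.1 - 1 := by
  unfold sigmaFn; split_ifs <;> rfl

lemma sigmaFn_involutive : Function.Involutive (sigmaFn n) := by
  intro i; ext; rw [sigmaFn_val, sigmaFn_val]; split_ifs <;> omega

@[simp] lemma sigmaFn_sigmaFn (i : Fin (2*n)) : sigmaFn n (sigmaFn n i) = i :=
  sigmaFn_involutive i

lemma sigmaFn_injective : Function.Injective (sigmaFn n) := sigmaFn_involutive.injective

@[simp] lemma sigmaFn_ne (i : Fin (2*n)) : sigmaFn n i ≠ i := by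
  intro h; have := congrArg Fin.val h; rw [sigmaFn_val] at this; split_ifs at this <;> omega

@[simp] lemma ne_sigmaFn (i : Fin (2*n)) : i ≠ sigmaFn n i := (sigmaFn_ne i).symm

lemma eq_sigmaFn_comm {i j : Fin (2*n)} : i = sigmaFn n j ↔ j = sigmaFn n i := by
  constructor <;> (rintro rfl; rw [sigmaFn_sigmaFn])

lemma neg_one_pow_sigmaFn (i : Fin (2*n)) : (-1 : R) ^ (sigmaFn n i).1 = -(-1) ^ i.1 := by
  rw [sigmaFn_val]
  split_ifs with h
  · rw [pow_succ, mul_neg_one]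
  · obtain ⟨k, hk⟩ : ∃ k, i.1 = k + 1 := ⟨i.1 - 1, by omega⟩
    rw [hk, Nat.add_sub_cancel, pow_succ, mul_neg_one, neg_neg]

lemma exists_ne_ne_sigmaFn (hn : 2 ≤ n) (j : Fin (2*n)) : ∃ m, m ≠ j ∧ m ≠ sigmaFn n j := by
  have hσ := sigmaFn_val j
  refine ⟨⟨if j.1 < 2 then 2 else 0, by split_ifs <;> omega⟩, fun h => ?_, fun h => ?_⟩ <;>
  · simp only [Fin.ext_iff] at h; split_ifs at h hσ <;> omega

end Sigma

section Matrices

variable {m : ℕ}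

def E (R : Type*) [CommRing R] (i j : Fin m) : Matrix (Fin m) (Fin m) R :=
  Matrix.single i j 1

lemma single_eq_smul_E (i j : Fin m) (a : R) : Matrix.single i j a = a • E R i j := by
  rw [E, Matrix.smul_single, smul_eq_mul, mul_one]

lemma E_mul_E (i j k l : Fin m) : E R i j * E R k l = if j = k then E R i l else 0 := by
  split_ifs with h
  · subst h; rw [E, E, E, Matrix.single_mul_single_same, one_mul]
  · exact Matrix.single_mul_single_of_ne (h := h) ..

end Matrices

variable {n : ℕ}

lemma seMat_of_eq {i j : Fin (2*n)} (h : i = sigmaFn n j) (a : R) :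
    seMat n i j a = 1 + a • E R i j := by
  rw [seMat, if_pos h, single_eq_smul_E]

lemma seMat_of_ne {i j : Fin (2*n)} (h : i ≠ sigmaFn n j) (a : R) :
    seMat n i j a = 1 + a • E R i j
      - ((-1:R)^(i.1+j.1) * a) • E R (sigmaFn n j) (sigmaFn n i) := by
  rw [seMat, if_neg h, single_eq_smul_E, single_eq_smul_E]

lemma seMat_zero (i j : Fin (2*n)) : seMat n i j (0:R) = 1 := by
  by_cases h : i = sigmaFn n j
  · rw [seMat_of_eq h, zero_smul, add_zero]
  · rw [seMat_of_ne h, zero_smul, mul_zero, zero_smul, add_zero, sub_zero]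

lemma seMat_mul_seMat {i j : Fin (2*n)} (hij : i ≠ j) (a b : R) :
    seMat n i j a * seMat n i j b = seMat n i j (a + b) := by
  by_cases h : i = sigmaFn n j
  · simp only [seMat_of_eq h, mul_add, add_mul, one_mul, mul_one, smul_mul_assoc, mul_smul_comm,
      E_mul_E, hij.symm, if_false, smul_zero, add_zero]
    module
  · have h' : sigmaFn n i ≠ sigmaFn n j := sigmaFn_injective.ne hij
    simp only [seMat_of_ne h, sub_mul, mul_sub, mul_add, add_mul, one_mul, mul_one, smul_mul_assoc,
      mul_smul_comm, E_mul_E, hij.symm, h', ne_sigmaFn, sigmaFn_ne, if_false,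
      smul_zero, add_zero, sub_zero]
    module

def seUnit (n : ℕ) (i j : Fin (2*n)) (h : i ≠ j) (a : R) :
    (Matrix (Fin (2*n)) (Fin (2*n)) R)ˣ where
  val := seMat n i j a
  inv := seMat n i j (-a)
  val_inv := by rw [seMat_mul_seMat h, add_neg_cancel, seMat_zero]
  inv_val := by rw [seMat_mul_seMat h, neg_add_cancel, seMat_zero]

@[simp] lemma seUnit_val (i j : Fin (2*n)) (h : i ≠ j) (a : R) :
    (seUnit n i j h a : Matrix (Fin (2*n)) (Fin (2*n)) R) = seMat n i j a := rfl

@[simp] lemma seUnit_inv (i j : Fin (2*n)) (h : i ≠ j) (a : R) :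
    (seUnit n i j h a)⁻¹ = seUnit n i j h (-a) := Units.ext rfl

lemma seUnit_mul_seUnit (i j : Fin (2*n)) (h : i ≠ j) (a b : R) :
    seUnit n i j h a * seUnit n i j h b = seUnit n i j h (a + b) :=
  Units.ext (seMat_mul_seMat h a b)

lemma seUnit_mem_Esp2n (i j : Fin (2*n)) (h : i ≠ j) (a : R) : seUnit n i j h a ∈ Esp2n R n :=
  Subgroup.subset_closure ⟨i, j, a, h, rfl⟩

lemma commutator_seUnit_long_short {j k : Fin (2*n)} (hkj : k ≠ j) (hksj : k ≠ sigmaFn n j)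
    (a b : R) :
    ⁅seUnit n (sigmaFn n j) j (sigmaFn_ne j) a, seUnit n j k hkj.symm b⁆ =
      seUnit n (sigmaFn n j) k hksj.symm (a * b) *
        seUnit n (sigmaFn n k) k (sigmaFn_ne k) (-(-1) ^ (j.1 + k.1) * a * b ^ 2) := by
  have hjsk : j ≠ sigmaFn n k := fun h => hksj (eq_sigmaFn_comm.mp h)
  ext1
  simp only [commutatorElement_def, Units.val_mul, seUnit_inv, seUnit_val]
  rw [seMat_of_eq rfl, seMat_of_ne hjsk, seMat_of_eq rfl, seMat_of_ne hjsk,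
    seMat_of_ne (sigmaFn_injective.ne hkj.symm), seMat_of_eq rfl]
  simp only [sigmaFn_sigmaFn, pow_add, neg_one_pow_sigmaFn, sub_mul, mul_sub, mul_add, add_mul,
    one_mul, mul_one, smul_mul_assoc, mul_smul_comm, E_mul_E, sigmaFn_injective.eq_iff,
    sigmaFn_ne, ne_sigmaFn, hkj, hkj.symm, hksj, hjsk, if_true, if_false,
    smul_zero, add_zero, sub_zero]
  module

lemma commutator_seUnit_short_short {i k : Fin (2*n)} (hik : i ≠ k) (hisk : i ≠ sigmaFn n k)
    (a b : R) :
    ⁅seUnit n (sigmaFn n k) i hisk.symm a, seUnit n k i hik.symm b⁆ =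
      seUnit n (sigmaFn n i) i (sigmaFn_ne i) (2 * (-1) ^ (i.1 + k.1) * a * b) := by
  have hksi : k ≠ sigmaFn n i := fun h => hisk (eq_sigmaFn_comm.mp h)
  ext1
  simp only [commutatorElement_def, Units.val_mul, seUnit_inv, seUnit_val]
  rw [seMat_of_ne (sigmaFn_injective.ne hik.symm), seMat_of_ne hksi,
    seMat_of_ne (sigmaFn_injective.ne hik.symm), seMat_of_ne hksi, seMat_of_eq rfl]
  simp only [sigmaFn_sigmaFn, pow_add, neg_one_pow_sigmaFn, sub_mul, mul_sub, mul_add, add_mul,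
    one_mul, mul_one, smul_mul_assoc, mul_smul_comm, E_mul_E, sigmaFn_injective.eq_iff,
    sigmaFn_ne, ne_sigmaFn, hik, hik.symm, hisk, hksi, if_true, if_false,
    smul_zero, add_zero, sub_zero]
  module

section Propagation

variable {I : Ideal R} {H : Subgroup (Matrix (Fin (2*n)) (Fin (2*n)) R)ˣ}

lemma seUnit_short_mem_of_long_mem (h2 : IsUnit (2 : R))
    (hH : ∀ e ∈ Esp2n R n, ∀ h ∈ H, e * h * e⁻¹ ∈ H) {j : Fin (2*n)}
    (hj : ∀ x ∈ I, seUnit n (sigmaFn n j) j (sigmaFn_ne j) x ∈ H)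
    {k : Fin (2*n)} (hkj : k ≠ j) (hksj : k ≠ sigmaFn n j) {x : R} (hx : x ∈ I) :
    seUnit n (sigmaFn n j) k hksj.symm x ∈ H := by
  obtain ⟨half, hhalf⟩ := h2.exists_right_inv
  have hcomm : ∀ b, ⁅seUnit n (sigmaFn n j) j (sigmaFn_ne j) x, seUnit n j k hkj.symm b⁆ ∈ H :=
    fun b => commutatorElement_mem_of_left_mem hH (hj x hx) (seUnit_mem_Esp2n _ _ _ b)
  -- the long-root factors of the two commutators coincide, since they depend on `b ^ 2` only
  have hmem := H.mul_mem (hcomm half) (H.inv_mem (hcomm (-half)))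
  rwa [commutator_seUnit_long_short hkj hksj, commutator_seUnit_long_short hkj hksj, neg_sq,
    _root_.mul_inv_rev, mul_assoc, mul_inv_cancel_left, seUnit_inv, seUnit_mul_seUnit,
    show x * half + -(x * -half) = x by linear_combination x * hhalf] at hmem

lemma seUnit_long_mem_of_long_mem_of_ne (h2 : IsUnit (2 : R))
    (hH : ∀ e ∈ Esp2n R n, ∀ h ∈ H, e * h * e⁻¹ ∈ H) {j : Fin (2*n)}
    (hj : ∀ x ∈ I, seUnit n (sigmaFn n j) j (sigmaFn_ne j) x ∈ H)
    {i : Fin (2*n)} (hij : i ≠ j) (hisj : i ≠ sigmaFn n j) {x : R} (hx : x ∈ I) :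
    seUnit n (sigmaFn n i) i (sigmaFn_ne i) x ∈ H := by
  obtain ⟨half, hhalf⟩ := h2.exists_right_inv
  have hmem := commutatorElement_mem_of_left_mem hH
    (seUnit_short_mem_of_long_mem h2 hH hj hij hisj hx)
    (seUnit_mem_Esp2n j i hij.symm ((-1) ^ (i.1 + j.1) * half))
  have hsq : ((-1 : R) ^ (i.1 + j.1)) ^ 2 = 1 := by rw [← pow_mul, pow_mul', neg_one_sq, one_pow]
  rwa [commutator_seUnit_short_short hij hisj,
    show 2 * (-1) ^ (i.1 + j.1) * x * ((-1) ^ (i.1 + j.1) * half) = x by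
      linear_combination (2 * x * half) * hsq + x * hhalf] at hmem

lemma seUnit_long_mem_of_long_mem (h2 : IsUnit (2 : R)) (hn : 2 ≤ n)
    (hH : ∀ e ∈ Esp2n R n, ∀ h ∈ H, e * h * e⁻¹ ∈ H) {j : Fin (2*n)}
    (hj : ∀ x ∈ I, seUnit n (sigmaFn n j) j (sigmaFn_ne j) x ∈ H) (i : Fin (2*n)) :
    ∀ x ∈ I, seUnit n (sigmaFn n i) i (sigmaFn_ne i) x ∈ H := by
  by_cases hij : i = j
  · exact hij ▸ hj
  by_cases hisj : i = sigmaFn n j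
  · obtain ⟨m, hmj, hmsj⟩ := exists_ne_ne_sigmaFn hn j
    have hm := fun x (hx : x ∈ I) => seUnit_long_mem_of_long_mem_of_ne h2 hH hj hmj hmsj hx
    exact fun x hx => seUnit_long_mem_of_long_mem_of_ne h2 hH hm (hisj ▸ hmsj.symm)
      (hisj ▸ sigmaFn_injective.ne hmj.symm) hx
  · exact fun x hx => seUnit_long_mem_of_long_mem_of_ne h2 hH hj hij hisj hx

lemma seUnit_mem_of_long_mem (h2 : IsUnit (2 : R)) (hn : 2 ≤ n)
    (hH : ∀ e ∈ Esp2n R n, ∀ h ∈ H, e * h * e⁻¹ ∈ H) {j : Fin (2*n)}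
    (hj : ∀ x ∈ I, seUnit n (sigmaFn n j) j (sigmaFn_ne j) x ∈ H)
    {i k : Fin (2*n)} (hik : i ≠ k) {x : R} (hx : x ∈ I) : seUnit n i k hik x ∈ H := by
  obtain ⟨l, rfl⟩ : ∃ l, i = sigmaFn n l := ⟨sigmaFn n i, (sigmaFn_sigmaFn i).symm⟩
  by_cases hlk : l = k
  · subst hlk
    exact seUnit_long_mem_of_long_mem h2 hn hH hj l x hx
  · exact seUnit_short_mem_of_long_mem h2 hH (seUnit_long_mem_of_long_mem h2 hn hH hj l)
      (Ne.symm hlk) (fun h => hik h.symm) hx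

lemma Esp2nIdeal_le_of_long_mem (h2 : IsUnit (2 : R)) (hn : 2 ≤ n)
    (hH : ∀ e ∈ Esp2n R n, ∀ h ∈ H, e * h * e⁻¹ ∈ H) {j : Fin (2*n)}
    (hj : ∀ x ∈ I, seUnit n (sigmaFn n j) j (sigmaFn_ne j) x ∈ H) :
    Esp2nIdeal R n I ≤ H := by
  refine (Subgroup.closure_le _).mpr ?_
  rintro g ⟨i, k, x, hik, hx, hg⟩
  rw [show g = seUnit n i k hik x from Units.ext hg]
  exact seUnit_mem_of_long_mem h2 hn hH hj hik hx

end Propagation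

lemma REsp2n_eq_conjClosure (I : Ideal R) :
    REsp2n R n I = conjClosure (Esp2n R n) (Esp2nIdeal R n I) := rfl

lemma Esp2nIdeal_le_Esp2n (I : Ideal R) : Esp2nIdeal R n I ≤ Esp2n R n :=
  Subgroup.closure_mono fun _ ⟨i, j, x, hij, _, hg⟩ => ⟨i, j, x, hij, hg⟩

/-- for `R = 2R`, `n ≥ 2` and an ideal `I`, `ESp_{2n}(R,I)` is the smallest
normal subgroup of `ESp_{2n}(R)` containing the elements `se_{21}(x)`, `x ∈ I`. -/
theorem resp2n_smallest_normal_containing_se21 {R : Type*} [CommRing R]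
    (h2 : IsUnit (2 : R)) (n : ℕ) (hn : 2 ≤ n) (I : Ideal R) :
    REsp2n R n I ≤ Esp2n R n ∧
    (∀ x ∈ I, ∀ g : (Matrix (Fin (2*n)) (Fin (2*n)) R)ˣ,
      (g : Matrix (Fin (2*n)) (Fin (2*n)) R) = seMat n ⟨1, by omega⟩ ⟨0, by omega⟩ x →
        g ∈ REsp2n R n I) ∧
    (∀ e ∈ Esp2n R n, ∀ x ∈ REsp2n R n I, e * x * e⁻¹ ∈ REsp2n R n I) ∧
    (∀ H : Subgroup (Matrix (Fin (2*n)) (Fin (2*n)) R)ˣ,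
      H ≤ Esp2n R n →
      (∀ e ∈ Esp2n R n, ∀ h ∈ H, e * h * e⁻¹ ∈ H) →
      (∀ x ∈ I, ∀ g : (Matrix (Fin (2*n)) (Fin (2*n)) R)ˣ,
        (g : Matrix (Fin (2*n)) (Fin (2*n)) R) = seMat n ⟨1, by omega⟩ ⟨0, by omega⟩ x →
          g ∈ H) →
      REsp2n R n I ≤ H) := by
  rw [REsp2n_eq_conjClosure]
  refine ⟨?_, ?_, fun e he x hx => conj_mem_conjClosure he hx, ?_⟩
  · exact conjClosure_le (fun e he g hg => mul_mem (mul_mem he hg) (inv_mem he))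
      (Esp2nIdeal_le_Esp2n I)
  · exact fun x hx g hg => mem_conjClosure_of_mem
      (Subgroup.subset_closure ⟨_, _, x, Fin.ne_of_val_ne one_ne_zero, hx, hg⟩)
  · exact fun H _ hH hgen => conjClosure_le hH
      (Esp2nIdeal_le_of_long_mem h2 hn hH (j := ⟨0, by omega⟩) fun x hx => hgen x hx _ rfl)

end PaperESp
end
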